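/- arXiv:math/0110118 — 2 statements merged into one kernel-verified Lean document; each statement's English description precedes it below -/
import Mathlib

section
/- For measurable f, g on ℝ² and x, y ∈ ℝ₊², (f+g)₂*(x+y) ≤ 2(f₂*(x) + g₂*(y)). -/
open MeasureTheory Set ENNReal Filter

/-! Since `|f + g| > t` forces `|f| > t/2` or `|g| > t/2`, and since both the section measure
`φ_E` and the one-dimensional rearrangement are subadditive, the latter in the form
`(φ + ψ)*(s + s') ≤ φ*(s) + ψ*(s')`, the point `x + y` can lie in `{|f + g| > t}*` only if
`x ∈ {|f| > t/2}*` or `y ∈ {|g| > t/2}*`. Integrating over `t` and substituting `t = 2s`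
produces the factor `2`. -/

/-- Classical decreasing rearrangement of an `ℝ≥0∞`-valued function. -/
noncomputable def decRe {α : Type*} [MeasurableSpace α] (μ : Measure α)
    (g : α → ℝ≥0∞) (t : ℝ) : ℝ≥0∞ :=
  sInf {l : ℝ≥0∞ | μ {x | l < g x} ≤ ENNReal.ofReal t}

/-- `φ_E(x)`: the measure of the `x`-section of `E`. -/
noncomputable def phiSec (E : Set (ℝ × ℝ)) (x : ℝ) : ℝ≥0∞ :=
  volume {y : ℝ | (x, y) ∈ E}

/-- The two-dimensional decreasing rearrangement `E*` of a set `E ⊆ ℝ²`. -/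
def starSet (E : Set (ℝ × ℝ)) : Set (ℝ × ℝ) :=
  {p | 0 < p.1 ∧ 0 < p.2 ∧ ENNReal.ofReal p.2 < decRe volume (phiSec E) p.1}

/-- The two-dimensional decreasing rearrangement `f₂*` of a function (layer-cake formula). -/
noncomputable def rearr2 (f : ℝ × ℝ → ℝ) (x : ℝ × ℝ) : ℝ≥0∞ :=
  ∫⁻ t in Set.Ioi (0 : ℝ), (starSet {p | t < |f p|}).indicator (fun _ => (1 : ℝ≥0∞)) x

/-- The open positive quadrant `ℝ₊²`. -/
def Quad : Set (ℝ × ℝ) := Set.Ioi 0 ×ˢ Set.Ioi 0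

lemma decRe_mono {α : Type*} [MeasurableSpace α] (μ : Measure α) {g₁ g₂ : α → ℝ≥0∞}
    (h : g₁ ≤ g₂) (t : ℝ) : decRe μ g₁ t ≤ decRe μ g₂ t :=
  sInf_le_sInf fun _ hl => (measure_mono fun x hx => lt_of_lt_of_le hx (h x)).trans hl

lemma decRe_add_le {α : Type*} [MeasurableSpace α] (μ : Measure α)
    (g₁ g₂ : α → ℝ≥0∞) {s t : ℝ} (hs : 0 ≤ s) (ht : 0 ≤ t) :
    decRe μ (g₁ + g₂) (s + t) ≤ decRe μ g₁ s + decRe μ g₂ t := by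
  unfold decRe
  conv_rhs => rw [sInf_eq_iInf, sInf_eq_iInf]
  refine le_iInf₂_add_iInf₂ fun l₁ hl₁ l₂ hl₂ => sInf_le ?_
  have hsub : {x | l₁ + l₂ < (g₁ + g₂) x} ⊆ {x | l₁ < g₁ x} ∪ {x | l₂ < g₂ x} := by
    intro x hx
    simp only [mem_union, mem_ofPred_eq]
    contrapose! hx
    exact not_lt.2 (add_le_add hx.1 hx.2)
  calc μ {x | l₁ + l₂ < (g₁ + g₂) x}
      ≤ μ {x | l₁ < g₁ x} + μ {x | l₂ < g₂ x} := (measure_mono hsub).trans (measure_union_le _ _)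
    _ ≤ ENNReal.ofReal s + ENNReal.ofReal t := add_le_add hl₁ hl₂
    _ = ENNReal.ofReal (s + t) := (ENNReal.ofReal_add hs ht).symm

lemma phiSec_mono {E F : Set (ℝ × ℝ)} (h : E ⊆ F) : phiSec E ≤ phiSec F :=
  fun _ => measure_mono fun _ hy => h hy

lemma phiSec_union_le (A B : Set (ℝ × ℝ)) : phiSec (A ∪ B) ≤ phiSec A + phiSec B :=
  fun _ => measure_union_le _ _

lemma starSet_mono {E F : Set (ℝ × ℝ)} (h : E ⊆ F) : starSet E ⊆ starSet F :=
  fun _ ⟨h₁, h₂, h₃⟩ => ⟨h₁, h₂, h₃.trans_le (decRe_mono _ (phiSec_mono h) _)⟩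

lemma add_mem_Quad {x y : ℝ × ℝ} (hx : x ∈ Quad) (hy : y ∈ Quad) : x + y ∈ Quad :=
  ⟨mem_Ioi.2 (add_pos hx.1 hy.1), mem_Ioi.2 (add_pos hx.2 hy.2)⟩

lemma mem_starSet_iff {E : Set (ℝ × ℝ)} {p : ℝ × ℝ} (hp : p ∈ Quad) :
    p ∈ starSet E ↔ ENNReal.ofReal p.2 < decRe volume (phiSec E) p.1 :=
  ⟨fun h => h.2.2, fun h => ⟨hp.1, hp.2, h⟩⟩

lemma mem_starSet_or_of_add_mem_starSet_union {A B : Set (ℝ × ℝ)} {x y : ℝ × ℝ}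
    (hx : x ∈ Quad) (hy : y ∈ Quad) (h : x + y ∈ starSet (A ∪ B)) :
    x ∈ starSet A ∨ y ∈ starSet B := by
  rw [mem_starSet_iff hx, mem_starSet_iff hy]
  by_contra! hAB
  have hsum := (mem_starSet_iff (add_mem_Quad hx hy)).1 h
  refine hsum.not_ge ?_
  calc decRe volume (phiSec (A ∪ B)) (x.1 + y.1)
      ≤ decRe volume (phiSec A + phiSec B) (x.1 + y.1) := decRe_mono _ (phiSec_union_le A B) _
    _ ≤ decRe volume (phiSec A) x.1 + decRe volume (phiSec B) y.1 :=
        decRe_add_le _ _ _ hx.1.le hy.1.le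
    _ ≤ ENNReal.ofReal x.2 + ENNReal.ofReal y.2 := add_le_add hAB.1 hAB.2
    _ = ENNReal.ofReal (x + y).2 := (ENNReal.ofReal_add hx.2.le hy.2.le).symm

lemma setOf_lt_abs_add_subset {α : Type*} (f g : α → ℝ) (t : ℝ) :
    {p | t < |f p + g p|} ⊆ {p | t / 2 < |f p|} ∪ {p | t / 2 < |g p|} := by
  intro p hp
  simp only [mem_union, mem_ofPred_eq] at hp ⊢
  by_contra! h
  linarith [abs_add_le (f p) (g p)]

lemma setLIntegral_Ioi_zero_comp_div (F : ℝ → ℝ≥0∞) {c : ℝ} (hc : 0 < c) :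
    ∫⁻ x in Ioi 0, F (x / c) = ENNReal.ofReal c * ∫⁻ x in Ioi 0, F x := by
  have hind : (Ioi 0).indicator (fun x => F (x / c)) =
      fun x => (Ioi 0).indicator F (MeasurableEquiv.mulLeft₀ c⁻¹ (inv_ne_zero hc.ne') x) := by
    ext x
    simp [indicator, div_eq_inv_mul, mul_pos_iff_of_pos_left, hc]
  rw [← lintegral_indicator measurableSet_Ioi, hind, ← lintegral_map_equiv,
    MeasurableEquiv.coe_mulLeft₀, Real.map_volume_mul_left (inv_ne_zero hc.ne'),
    lintegral_smul_measure, lintegral_indicator measurableSet_Ioi, inv_inv, abs_of_pos hc]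
  rfl

noncomputable def rearr2Layer (f : ℝ × ℝ → ℝ) (x : ℝ × ℝ) (t : ℝ) : ℝ≥0∞ :=
  (starSet {p | t < |f p|}).indicator (fun _ => 1) x

lemma rearr2_eq_lintegral_rearr2Layer (f : ℝ × ℝ → ℝ) (x : ℝ × ℝ) :
    rearr2 f x = ∫⁻ t in Ioi 0, rearr2Layer f x t :=
  rfl

lemma antitone_rearr2Layer (f : ℝ × ℝ → ℝ) (x : ℝ × ℝ) : Antitone (rearr2Layer f x) :=
  fun _ _ hst => indicator_le_indicator_of_subset
    (starSet_mono fun _ hp => lt_of_le_of_lt hst hp) (fun _ => zero_le) x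

lemma rearr2Layer_add_le (f g : ℝ × ℝ → ℝ) {x y : ℝ × ℝ} (hx : x ∈ Quad) (hy : y ∈ Quad)
    (t : ℝ) : rearr2Layer (fun p => f p + g p) (x + y) t ≤
      rearr2Layer f x (t / 2) + rearr2Layer g y (t / 2) := by
  by_cases h : x + y ∈ starSet {p | t < |f p + g p|}
  · rcases mem_starSet_or_of_add_mem_starSet_union hx hy
      (starSet_mono (setOf_lt_abs_add_subset f g t) h) with hxf | hyg
    · simp [rearr2Layer, indicator_of_mem h, indicator_of_mem hxf]
    · simp [rearr2Layer, indicator_of_mem h, indicator_of_mem hyg]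
  · simp [rearr2Layer, indicator_of_notMem h]

theorem stmt9_general (f g : ℝ × ℝ → ℝ)
    (x y : ℝ × ℝ) (hx : x ∈ Quad) (hy : y ∈ Quad) :
    rearr2 (fun p => f p + g p) (x + y) ≤ 2 * (rearr2 f x + rearr2 g y) := by
  simp only [rearr2_eq_lintegral_rearr2Layer]
  calc ∫⁻ t in Ioi 0, rearr2Layer (fun p => f p + g p) (x + y) t
      ≤ ∫⁻ t in Ioi 0, (rearr2Layer f x (t / 2) + rearr2Layer g y (t / 2)) :=
        lintegral_mono (rearr2Layer_add_le f g hx hy)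
    _ = (∫⁻ t in Ioi 0, rearr2Layer f x (t / 2)) + ∫⁻ t in Ioi 0, rearr2Layer g y (t / 2) :=
        lintegral_add_left ((antitone_rearr2Layer f x).measurable.comp
          (measurable_id.div_const 2)) _
    _ = 2 * ((∫⁻ t in Ioi 0, rearr2Layer f x t) + ∫⁻ t in Ioi 0, rearr2Layer g y t) := by
        rw [setLIntegral_Ioi_zero_comp_div _ two_pos, setLIntegral_Ioi_zero_comp_div _ two_pos,
          ENNReal.ofReal_ofNat, mul_add]

theorem stmt9 (f g : ℝ × ℝ → ℝ) (hf : Measurable f) (hg : Measurable g)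
    (x y : ℝ × ℝ) (hx : x ∈ Quad) (hy : y ∈ Quad) :
    rearr2 (fun p => f p + g p) (x + y) ≤ 2 * (rearr2 f x + rearr2 g y) :=
  stmt9_general f g x y hx hy
end

section
/- For measurable functions f, g on ℝ², ∫_{ℝ²} |f g| dx ≤ ∫_{ℝ₊²} f₂* g₂* dx ≤ ∫₀^∞ f*(t) g*(t) dt, a two-dimensional refinement of the Hardy–Littlewood inequality. -/
open MeasureTheory Set ENNReal Filter

/-! By the layer-cake formula, each of the three integrals is a double integral over levels
`s, t > 0` of `|E_s ∩ F_t|`, `|E_s* ∩ F_t*|` and `min |E_s| |F_t|` respectively, where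
`E_s = {|f| > s}` and `F_t = {|g| > t}`; so it suffices to compare these for fixed measurable
`E, F ⊆ ℝ²`. Integrating over vertical sections, and using `l < φ*(x) ↔ x < |{φ > l}|`,
`|E* ∩ F*| = ∫ min (φ_E*, φ_F*) = ∫_l min (|{φ_E > l}|, |{φ_F > l}|)`.
This dominates `∫_l |{φ_E > l} ∩ {φ_F > l}| = ∫ min (φ_E, φ_F) ≥ |E ∩ F|`, and is dominated by
`min (|E*|, |F*|) = min (|E|, |F|)`. -/

theorem volume_setOf_pos_ofReal_lt (c : ℝ≥0∞) :
    volume {y : ℝ | 0 < y ∧ ENNReal.ofReal y < c} = c := by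
  rcases eq_or_ne c ∞ with rfl | hc
  · simp only [ofReal_lt_top, and_true]
    exact Real.volume_Ioi
  · have h : {y : ℝ | 0 < y ∧ ENNReal.ofReal y < c} = Ioo 0 c.toReal := by
      ext y
      simp only [mem_ofPred_eq, mem_Ioo, and_congr_right_iff]
      exact fun hy => ENNReal.ofReal_lt_iff_lt_toReal hy.le hc
    rw [h, Real.volume_Ioo, sub_zero, ENNReal.ofReal_toReal hc]

theorem setLIntegral_Ioi_indicator_ofReal_lt (c : ℝ≥0∞) :
    ∫⁻ s in Ioi (0 : ℝ), {s' : ℝ | ENNReal.ofReal s' < c}.indicator (fun _ => 1) s = c := by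
  have hm : MeasurableSet {s' : ℝ | ENNReal.ofReal s' < c} :=
    measurableSet_lt ENNReal.measurable_ofReal measurable_const
  rw [lintegral_indicator hm, setLIntegral_one, Measure.restrict_apply hm, inter_comm]
  exact volume_setOf_pos_ofReal_lt c

theorem ofReal_abs_eq_setLIntegral_indicator {α : Type*} (F : α → ℝ) (x : α) :
    ENNReal.ofReal |F x| =
      ∫⁻ s in Ioi (0 : ℝ), {p | s < |F p|}.indicator (fun _ => (1 : ℝ≥0∞)) x := by
  rw [← setLIntegral_Ioi_indicator_ofReal_lt (ENNReal.ofReal |F x|)]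
  refine setLIntegral_congr_fun measurableSet_Ioi fun s hs => ?_
  simp only [indicator, mem_ofPred_eq, ENNReal.ofReal_lt_ofReal_iff_of_nonneg (le_of_lt hs)]

theorem setOf_ofReal_lt_ofReal_abs {α : Type*} {s : ℝ} (hs : 0 ≤ s) (F : α → ℝ) :
    {a | ENNReal.ofReal s < ENNReal.ofReal |F a|} = {a | s < |F a|} := by
  simp only [ENNReal.ofReal_lt_ofReal_iff_of_nonneg hs]

section decRe

variable {α : Type*} [MeasurableSpace α] (μ : Measure α) (φ : α → ℝ≥0∞)

theorem decRe_antitone : Antitone (decRe μ φ) := fun _ _ hxy =>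
  sInf_le_sInf fun _ hl => hl.trans (ENNReal.ofReal_le_ofReal hxy)

theorem measurable_decRe : Measurable (decRe μ φ) := (decRe_antitone μ φ).measurable

theorem measure_lt_le_of_decRe_le {l : ℝ≥0∞} {x : ℝ} (H : decRe μ φ x ≤ l) :
    μ {a | l < φ a} ≤ ENNReal.ofReal x := by
  rcases eq_or_ne l ∞ with rfl | hl
  · simp
  -- continuity of `μ` from below along levels `u n` decreasing to `l`
  obtain ⟨u, hu_anti, hu_mem, hu_lim⟩ := exists_seq_strictAnti_tendsto' hl.lt_top
  have hU : {a | l < φ a} = ⋃ n, {a | u n < φ a} := by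
    ext a
    simp only [mem_iUnion, mem_ofPred_eq]
    refine ⟨fun ha => (hu_lim.eventually (gt_mem_nhds ha)).exists, fun ⟨n, hn⟩ => ?_⟩
    exact (hu_mem n).1.trans hn
  have hmono : Monotone fun n => {a | u n < φ a} := fun m n hmn a ha =>
    (hu_anti.antitone hmn).trans_lt ha
  rw [hU, hmono.measure_iUnion]
  refine iSup_le fun n => ?_
  obtain ⟨s, hs, hsu⟩ := sInf_lt_iff.mp (H.trans_lt (hu_mem n).1)
  exact (measure_mono fun a ha => hsu.trans ha).trans hs

theorem lt_decRe_iff (l : ℝ≥0∞) (x : ℝ) :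
    l < decRe μ φ x ↔ ENNReal.ofReal x < μ {a | l < φ a} := by
  refine ⟨fun H => ?_, fun H => ?_⟩
  · by_contra! hle
    exact (show decRe μ φ x ≤ l from sInf_le hle).not_gt H
  · by_contra! hle
    exact (measure_lt_le_of_decRe_le μ φ hle).not_gt H

end decRe

theorem volume_setOf_pos_lt_decRe_and_lt_decRe {α β : Type*} [MeasurableSpace α]
    [MeasurableSpace β] (μ : Measure α) (ν : Measure β) (φ : α → ℝ≥0∞) (ψ : β → ℝ≥0∞)
    (l l' : ℝ≥0∞) :
    volume {r : ℝ | 0 < r ∧ l < decRe μ φ r ∧ l' < decRe ν ψ r}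
      = min (μ {a | l < φ a}) (ν {b | l' < ψ b}) := by
  simp only [lt_decRe_iff, ← lt_min_iff, volume_setOf_pos_ofReal_lt]

theorem lintegral_eq_setLIntegral_measure_ofReal_lt {α : Type*} [MeasurableSpace α]
    (μ : Measure α) [SFinite μ] {φ : α → ℝ≥0∞} (hφ : Measurable φ) :
    ∫⁻ a, φ a ∂μ = ∫⁻ l in Ioi (0 : ℝ), μ {a | ENNReal.ofReal l < φ a} := by
  have hlev : MeasurableSet {p : α × ℝ | ENNReal.ofReal p.2 < φ p.1} :=
    measurableSet_lt (by fun_prop) (hφ.comp measurable_fst)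
  calc ∫⁻ a, φ a ∂μ
      = ∫⁻ a, (∫⁻ l in Ioi (0 : ℝ),
          {l' : ℝ | ENNReal.ofReal l' < φ a}.indicator (fun _ => 1) l) ∂μ := by
        simp only [setLIntegral_Ioi_indicator_ofReal_lt]
    _ = ∫⁻ l in Ioi (0 : ℝ), ∫⁻ a,
          {a' | ENNReal.ofReal l < φ a'}.indicator (fun _ => 1) a ∂μ :=
        lintegral_lintegral_swap (measurable_const.indicator hlev).aemeasurable
    _ = ∫⁻ l in Ioi (0 : ℝ), μ {a | ENNReal.ofReal l < φ a} := by
        refine lintegral_congr fun l => ?_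
        exact lintegral_indicator_one (measurableSet_lt measurable_const hφ)

theorem lintegral_mul_eq_lintegral_lintegral_measure_inter {α β : Type*} [MeasurableSpace α]
    [MeasurableSpace β] (ν : Measure α) (ρ : Measure β) [SFinite ν] [SFinite ρ]
    {A B : β → Set α} (hA : MeasurableSet {p : β × α | p.2 ∈ A p.1})
    (hB : MeasurableSet {p : β × α | p.2 ∈ B p.1}) :
    ∫⁻ x, (∫⁻ s, (A s).indicator (fun _ => 1) x ∂ρ) *
        (∫⁻ t, (B t).indicator (fun _ => 1) x ∂ρ) ∂ν
      = ∫⁻ s, ∫⁻ t, ν (A s ∩ B t) ∂ρ ∂ρ := by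
  have hIA : Measurable fun p : β × α => (A p.1).indicator (fun _ => (1 : ℝ≥0∞)) p.2 :=
    measurable_const.indicator hA
  have hIB : Measurable fun p : β × α => (B p.1).indicator (fun _ => (1 : ℝ≥0∞)) p.2 :=
    measurable_const.indicator hB
  have hIAB : Measurable fun q : α × β × β =>
      (A q.2.1).indicator (fun _ => (1 : ℝ≥0∞)) q.1 * (B q.2.2).indicator (fun _ => 1) q.1 :=
    (hIA.comp (measurable_snd.fst.prodMk measurable_fst)).mul
      (hIB.comp (measurable_snd.snd.prodMk measurable_fst))
  calc _ = ∫⁻ x, ∫⁻ st : β × β, (A st.1).indicator (fun _ => 1) x *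
          (B st.2).indicator (fun _ => 1) x ∂ρ.prod ρ ∂ν := by
        refine lintegral_congr fun x => (lintegral_prod_mul ?_ ?_).symm
        · exact (hIA.comp measurable_prodMk_right).aemeasurable
        · exact (hIB.comp measurable_prodMk_right).aemeasurable
    _ = ∫⁻ st : β × β, ∫⁻ x,
          (A st.1).indicator (fun _ => 1) x * (B st.2).indicator (fun _ => 1) x ∂ν ∂ρ.prod ρ :=
        lintegral_lintegral_swap hIAB.aemeasurable
    _ = ∫⁻ s, ∫⁻ t, ν (A s ∩ B t) ∂ρ ∂ρ := by
        rw [lintegral_prod _ hIAB.lintegral_prod_left'.aemeasurable]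
        refine lintegral_congr fun s => lintegral_congr fun t => ?_
        have hAs : MeasurableSet (A s) := hA.preimage measurable_prodMk_left
        have hBt : MeasurableSet (B t) := hB.preimage measurable_prodMk_left
        rw [← lintegral_indicator_one (hAs.inter hBt), inter_indicator_one]
        rfl

theorem measurable_phiSec {E : Set (ℝ × ℝ)} (hE : MeasurableSet E) : Measurable (phiSec E) :=
  measurable_measure_prodMk_left hE

theorem volume_eq_lintegral_phiSec {E : Set (ℝ × ℝ)} (hE : MeasurableSet E) :
    volume E = ∫⁻ x, phiSec E x := by
  rw [Measure.volume_eq_prod, Measure.prod_apply hE]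
  rfl

theorem measurableSet_starSet (E : Set (ℝ × ℝ)) : MeasurableSet (starSet E) :=
  (measurable_fst measurableSet_Ioi).inter ((measurable_snd measurableSet_Ioi).inter
    (measurableSet_lt measurable_snd.ennreal_ofReal
      ((measurable_decRe volume (phiSec E)).comp measurable_fst)))

theorem starSet_subset_Quad (E : Set (ℝ × ℝ)) : starSet E ⊆ Quad :=
  fun _ hp => ⟨hp.1, hp.2.1⟩

theorem measurableSet_setOf_mem_starSet {β : Type*} [MeasurableSpace β]
    {E : Set (β × (ℝ × ℝ))} (hE : MeasurableSet E) :
    MeasurableSet {p : β × (ℝ × ℝ) | p.2 ∈ starSet {q | (p.1, q) ∈ E}} := by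
  have hΦ : Measurable fun q : β × ℝ => volume {z : ℝ | (q.1, (q.2, z)) ∈ E} :=
    measurable_measure_prodMk_left
      (hE.preimage (by fun_prop : Measurable fun r : (β × ℝ) × ℝ => (r.1.1, (r.1.2, r.2))))
  have hΨ : Measurable fun q : β × ℝ =>
      volume {a : ℝ | ENNReal.ofReal q.2 < volume {z : ℝ | (q.1, (a, z)) ∈ E}} :=
    measurable_measure_prodMk_left (measurableSet_lt measurable_fst.snd.ennreal_ofReal
      (hΦ.comp (by fun_prop : Measurable fun r : (β × ℝ) × ℝ => (r.1.1, r.2))))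
  have hset : {p : β × (ℝ × ℝ) | p.2 ∈ starSet {q | (p.1, q) ∈ E}} =
      {p | 0 < p.2.1 ∧ 0 < p.2.2 ∧ ENNReal.ofReal p.2.1 <
        volume {a : ℝ | ENNReal.ofReal p.2.2 < volume {z : ℝ | (p.1, (a, z)) ∈ E}}} := by
    ext p
    simp only [starSet, mem_ofPred_eq, lt_decRe_iff]
    rfl
  rw [hset]
  exact (measurable_snd.fst measurableSet_Ioi).inter ((measurable_snd.snd measurableSet_Ioi).inter
    (measurableSet_lt measurable_snd.fst.ennreal_ofReal
      (hΨ.comp (measurable_fst.prodMk measurable_snd.snd))))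

theorem volume_starSet_inter (E F : Set (ℝ × ℝ)) :
    volume (starSet E ∩ starSet F)
      = ∫⁻ x in Ioi (0 : ℝ), min (decRe volume (phiSec E) x) (decRe volume (phiSec F) x) := by
  rw [Measure.volume_eq_prod,
    Measure.prod_apply ((measurableSet_starSet E).inter (measurableSet_starSet F)),
    ← lintegral_indicator measurableSet_Ioi]
  refine lintegral_congr fun x => ?_
  by_cases hx : 0 < x
  · rw [indicator_of_mem (show x ∈ Ioi 0 from hx)]
    refine (congrArg volume ?_).trans (volume_setOf_pos_ofReal_lt _)
    ext y
    simp only [starSet, mem_preimage, mem_inter_iff, mem_ofPred_eq, lt_min_iff, hx, true_and]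
    tauto
  · rw [indicator_of_notMem (show x ∉ Ioi 0 from hx)]
    convert measure_empty (μ := volume)
    ext y
    simp only [starSet, mem_preimage, mem_inter_iff, mem_ofPred_eq, hx, false_and, and_false,
      mem_empty_iff_false]

theorem setLIntegral_min_decRe {α β : Type*} [MeasurableSpace α] [MeasurableSpace β]
    (μ : Measure α) (ν : Measure β) (φ : α → ℝ≥0∞) (ψ : β → ℝ≥0∞) :
    ∫⁻ x in Ioi (0 : ℝ), min (decRe μ φ x) (decRe ν ψ x)
      = ∫⁻ l in Ioi (0 : ℝ),
          min (μ {a | ENNReal.ofReal l < φ a}) (ν {b | ENNReal.ofReal l < ψ b}) := by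
  have hmin := (measurable_decRe μ φ).min (measurable_decRe ν ψ)
  rw [lintegral_eq_setLIntegral_measure_ofReal_lt _ hmin]
  refine lintegral_congr fun l => ?_
  rw [Measure.restrict_apply (measurableSet_lt measurable_const hmin),
    ← volume_setOf_pos_lt_decRe_and_lt_decRe]
  congr 1
  ext x
  simp only [mem_inter_iff, mem_ofPred_eq, mem_Ioi, lt_min_iff]
  tauto

theorem volume_starSet {E : Set (ℝ × ℝ)} (hE : MeasurableSet E) :
    volume (starSet E) = volume E := by
  rw [← inter_self (starSet E), volume_starSet_inter, setLIntegral_min_decRe,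
    volume_eq_lintegral_phiSec hE,
    lintegral_eq_setLIntegral_measure_ofReal_lt volume (measurable_phiSec hE)]
  simp only [min_self]

theorem volume_starSet_inter_le_min {E F : Set (ℝ × ℝ)} (hE : MeasurableSet E)
    (hF : MeasurableSet F) :
    volume (starSet E ∩ starSet F) ≤ min (volume E) (volume F) :=
  le_min ((measure_mono inter_subset_left).trans_eq (volume_starSet hE))
    ((measure_mono inter_subset_right).trans_eq (volume_starSet hF))

theorem volume_inter_le_volume_starSet_inter {E F : Set (ℝ × ℝ)} (hE : MeasurableSet E)
    (hF : MeasurableSet F) :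
    volume (E ∩ F) ≤ volume (starSet E ∩ starSet F) := by
  have hφE := measurable_phiSec hE
  have hφF := measurable_phiSec hF
  calc volume (E ∩ F) = ∫⁻ x, phiSec (E ∩ F) x := volume_eq_lintegral_phiSec (hE.inter hF)
    _ ≤ ∫⁻ x, min (phiSec E x) (phiSec F x) :=
        lintegral_mono fun x => le_min (measure_mono fun _ hy => hy.1)
          (measure_mono fun _ hy => hy.2)
    _ = ∫⁻ l in Ioi (0 : ℝ), volume
          ({a | ENNReal.ofReal l < phiSec E a} ∩ {a | ENNReal.ofReal l < phiSec F a}) := by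
        rw [lintegral_eq_setLIntegral_measure_ofReal_lt volume (hφE.min hφF)]
        simp only [lt_min_iff, ofPred_and]
    _ ≤ ∫⁻ l in Ioi (0 : ℝ), min (volume {a | ENNReal.ofReal l < phiSec E a})
          (volume {a | ENNReal.ofReal l < phiSec F a}) :=
        lintegral_mono fun l => le_min (measure_mono inter_subset_left)
          (measure_mono inter_subset_right)
    _ = volume (starSet E ∩ starSet F) := by
        rw [volume_starSet_inter, setLIntegral_min_decRe]

theorem lintegral_ofReal_abs_mul {α : Type*} [MeasurableSpace α] (ν : Measure α) [SFinite ν]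
    {f g : α → ℝ} (hf : Measurable f) (hg : Measurable g) :
    ∫⁻ x, ENNReal.ofReal |f x * g x| ∂ν
      = ∫⁻ s in Ioi (0 : ℝ), ∫⁻ t in Ioi (0 : ℝ), ν ({p | s < |f p|} ∩ {p | t < |g p|}) := by
  have hfg : ∀ x, ENNReal.ofReal |f x * g x|
      = (∫⁻ s in Ioi (0 : ℝ), {p | s < |f p|}.indicator (fun _ => 1) x) *
          ∫⁻ t in Ioi (0 : ℝ), {p | t < |g p|}.indicator (fun _ => 1) x := fun x => by
    rw [abs_mul, ENNReal.ofReal_mul (abs_nonneg _), ofReal_abs_eq_setLIntegral_indicator f,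
      ofReal_abs_eq_setLIntegral_indicator g]
  rw [lintegral_congr hfg]
  exact lintegral_mul_eq_lintegral_lintegral_measure_inter ν _
    (measurableSet_lt measurable_fst (hf.abs.comp measurable_snd))
    (measurableSet_lt measurable_fst (hg.abs.comp measurable_snd))

theorem setLIntegral_Quad_rearr2_mul {f g : ℝ × ℝ → ℝ} (hf : Measurable f)
    (hg : Measurable g) :
    ∫⁻ x in Quad, rearr2 f x * rearr2 g x
      = ∫⁻ s in Ioi (0 : ℝ), ∫⁻ t in Ioi (0 : ℝ),
          volume (starSet {p | s < |f p|} ∩ starSet {p | t < |g p|}) := by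
  have hA : MeasurableSet {p : ℝ × (ℝ × ℝ) | p.2 ∈ starSet {q | p.1 < |f q|}} :=
    measurableSet_setOf_mem_starSet (E := {p | p.1 < |f p.2|})
      (measurableSet_lt measurable_fst (hf.abs.comp measurable_snd))
  have hB : MeasurableSet {p : ℝ × (ℝ × ℝ) | p.2 ∈ starSet {q | p.1 < |g q|}} :=
    measurableSet_setOf_mem_starSet (E := {p | p.1 < |g p.2|})
      (measurableSet_lt measurable_fst (hg.abs.comp measurable_snd))
  unfold rearr2
  rw [lintegral_mul_eq_lintegral_lintegral_measure_inter _ _ hA hB]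
  refine lintegral_congr fun s => lintegral_congr fun t => ?_
  rw [Measure.restrict_apply ((measurableSet_starSet _).inter (measurableSet_starSet _)),
    inter_eq_left.mpr (inter_subset_left.trans (starSet_subset_Quad _))]

theorem setLIntegral_decRe_mul_decRe {α β : Type*} [MeasurableSpace α] [MeasurableSpace β]
    (μ : Measure α) (ν : Measure β) (φ : α → ℝ≥0∞) (ψ : β → ℝ≥0∞) :
    ∫⁻ r in Ioi (0 : ℝ), decRe μ φ r * decRe ν ψ r
      = ∫⁻ s in Ioi (0 : ℝ), ∫⁻ t in Ioi (0 : ℝ),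
          min (μ {a | ENNReal.ofReal s < φ a}) (ν {b | ENNReal.ofReal t < ψ b}) := by
  have hlayers : ∀ r, decRe μ φ r * decRe ν ψ r
      = (∫⁻ s in Ioi (0 : ℝ), {r | ENNReal.ofReal s < decRe μ φ r}.indicator (fun _ => 1) r) *
          ∫⁻ t in Ioi (0 : ℝ), {r | ENNReal.ofReal t < decRe ν ψ r}.indicator (fun _ => 1) r :=
    fun r => congrArg₂ (· * ·) (setLIntegral_Ioi_indicator_ofReal_lt (decRe μ φ r)).symm
      (setLIntegral_Ioi_indicator_ofReal_lt (decRe ν ψ r)).symm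
  have hA : MeasurableSet {p : ℝ × ℝ | p.2 ∈ {r | ENNReal.ofReal p.1 < decRe μ φ r}} :=
    measurableSet_lt measurable_fst.ennreal_ofReal ((measurable_decRe μ φ).comp measurable_snd)
  have hB : MeasurableSet {p : ℝ × ℝ | p.2 ∈ {r | ENNReal.ofReal p.1 < decRe ν ψ r}} :=
    measurableSet_lt measurable_fst.ennreal_ofReal ((measurable_decRe ν ψ).comp measurable_snd)
  rw [lintegral_congr hlayers, lintegral_mul_eq_lintegral_lintegral_measure_inter _ _ hA hB]
  refine lintegral_congr fun s => lintegral_congr fun t => ?_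
  rw [Measure.restrict_apply ((measurableSet_lt measurable_const (measurable_decRe μ φ)).inter
    (measurableSet_lt measurable_const (measurable_decRe ν ψ))),
    ← volume_setOf_pos_lt_decRe_and_lt_decRe]
  congr 1
  ext r
  simp only [mem_inter_iff, mem_ofPred_eq, mem_Ioi]
  tauto

theorem stmt15 (f g : ℝ × ℝ → ℝ) (hf : Measurable f) (hg : Measurable g) :
    (∫⁻ x, ENNReal.ofReal |f x * g x|) ≤ (∫⁻ x in Quad, rearr2 f x * rearr2 g x) ∧
      (∫⁻ x in Quad, rearr2 f x * rearr2 g x)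
        ≤ ∫⁻ t in Set.Ioi (0 : ℝ),
            decRe volume (fun y => ENNReal.ofReal |f y|) t *
              decRe volume (fun y => ENNReal.ofReal |g y|) t := by
  have hE : ∀ s : ℝ, MeasurableSet {p : ℝ × ℝ | s < |f p|} := fun _ =>
    measurableSet_lt measurable_const hf.abs
  have hF : ∀ t : ℝ, MeasurableSet {p : ℝ × ℝ | t < |g p|} := fun _ =>
    measurableSet_lt measurable_const hg.abs
  rw [lintegral_ofReal_abs_mul volume hf hg, setLIntegral_Quad_rearr2_mul hf hg,
    setLIntegral_decRe_mul_decRe]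
  refine ⟨lintegral_mono fun s => lintegral_mono fun t =>
    volume_inter_le_volume_starSet_inter (hE s) (hF t), ?_⟩
  refine setLIntegral_mono' measurableSet_Ioi fun s hs =>
    setLIntegral_mono' measurableSet_Ioi fun t ht => ?_
  rw [setOf_ofReal_lt_ofReal_abs (le_of_lt hs), setOf_ofReal_lt_ofReal_abs (le_of_lt ht)]
  exact volume_starSet_inter_le_min (hE s) (hF t)
end
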